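/- arXiv:1303.2800 — 5 statements merged into one kernel-verified Lean document; each statement's English description precedes it below -/
import Mathlib

section
/- Let n, m be positive integers and let M₁ = [[A₁, B₁],[B₁', C₁]] and M₂ = [[A₂, B₂],[B₂', C₂]] be real symmetric positive semidefinite (n+m)×(n+m) matrices partitioned so that Aᵢ is n×n and Cᵢ is m×m. If M₁ ⪯ M₂, then for any matrices W₁, W₂ with Cᵢ Wᵢ Cᵢ = Cᵢ (i = 1, 2) one has A₁ − B₁ W₁ B₁' ⪯ A₂ − B₂ W₂ B₂'. In other words, the Schur complement of a positive semidefinite matrix is a nondecreasing function of the matrix in the Loewner order, and its value does not depend on the choice of generalized inverse. -/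
open Matrix

lemma aux_ker {n m : ℕ} {A : Matrix (Fin n) (Fin n) ℝ} {B : Matrix (Fin n) (Fin m) ℝ}
    {C : Matrix (Fin m) (Fin m) ℝ}
    (hM : (Matrix.fromBlocks A B Bᵀ C).PosSemidef) {v : Fin m → ℝ}
    (hv : C *ᵥ v = 0) : B *ᵥ v = 0 := by
  set u : (Fin n ⊕ Fin m) → ℝ := Sum.elim 0 v with hu
  have hMu : (Matrix.fromBlocks A B Bᵀ C) *ᵥ u = Sum.elim (B *ᵥ v) 0 := by
    rw [hu, fromBlocks_mulVec]
    simp [hv]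
  have hz : star u ⬝ᵥ (Matrix.fromBlocks A B Bᵀ C) *ᵥ u = 0 := by
    rw [hMu, hu]
    simp [dotProduct, Fintype.sum_sum_type]
  have h0 := (hM.dotProduct_mulVec_zero_iff u).mp hz
  rw [hMu] at h0
  ext i
  exact congrFun h0 (Sum.inl i)

lemma aux_BWC {n m : ℕ} {A : Matrix (Fin n) (Fin n) ℝ} {B : Matrix (Fin n) (Fin m) ℝ}
    {C W : Matrix (Fin m) (Fin m) ℝ}
    (hM : (Matrix.fromBlocks A B Bᵀ C).PosSemidef) (hW : C * W * C = C) :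
    B * W * C = B := by
  have h1 : C * (W * C - 1) = 0 := by
    rw [Matrix.mul_sub, Matrix.mul_one, ← Matrix.mul_assoc, hW, sub_self]
  have h2 : B * (W * C - 1) = 0 := by
    ext i j
    have hv : C *ᵥ (fun k => (W * C - 1) k j) = 0 := by
      ext i'
      have := congrFun (congrFun h1 i') j
      simpa [Matrix.mul_apply, Matrix.mulVec, dotProduct] using this
    have := congrFun (aux_ker hM hv) i
    simpa [Matrix.mul_apply, Matrix.mulVec, dotProduct] using this
  rw [Matrix.mul_sub, Matrix.mul_one, sub_eq_zero] at h2
  rw [Matrix.mul_assoc]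
  exact h2

/-- The Schur complement of a real symmetric positive semidefinite block matrix is
nondecreasing in the Loewner order, and does not depend on the choice of
generalized inverse of the lower-right block. -/
theorem schur_complement_monotone
    (n m : ℕ) (hn : 0 < n) (hm : 0 < m)
    (A₁ A₂ : Matrix (Fin n) (Fin n) ℝ)
    (B₁ B₂ : Matrix (Fin n) (Fin m) ℝ)
    (C₁ C₂ : Matrix (Fin m) (Fin m) ℝ)
    (W₁ W₂ : Matrix (Fin m) (Fin m) ℝ)
    (hM₁ : (Matrix.fromBlocks A₁ B₁ B₁ᵀ C₁).PosSemidef)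
    (hM₂ : (Matrix.fromBlocks A₂ B₂ B₂ᵀ C₂).PosSemidef)
    (hle : (Matrix.fromBlocks A₂ B₂ B₂ᵀ C₂ - Matrix.fromBlocks A₁ B₁ B₁ᵀ C₁).PosSemidef)
    (hW₁ : C₁ * W₁ * C₁ = C₁) (hW₂ : C₂ * W₂ * C₂ = C₂) :
    ((A₂ - B₂ * W₂ * B₂ᵀ) - (A₁ - B₁ * W₁ * B₁ᵀ)).PosSemidef := by
  -- symmetry of the lower-right blocks
  have hC₁ : C₁ᵀ = C₁ := by
    ext i j
    have := congrFun (congrFun hM₁.isHermitian.eq (Sum.inr i)) (Sum.inr j)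
    simpa using this
  have hC₂ : C₂ᵀ = C₂ := by
    ext i j
    have := congrFun (congrFun hM₂.isHermitian.eq (Sum.inr i)) (Sum.inr j)
    simpa using this
  -- the range conditions
  have hB₁ : B₁ * W₁ * C₁ = B₁ := aux_BWC hM₁ hW₁
  have hB₂ : B₂ * W₂ * C₂ = B₂ := aux_BWC hM₂ hW₂
  have f₁ : C₁ * (W₁ᵀ * B₁ᵀ) = B₁ᵀ := by
    have := congrArg Matrix.transpose hB₁
    rw [Matrix.transpose_mul, Matrix.transpose_mul, hC₁] at this
    exact this
  have f₂ : C₂ * (W₂ᵀ * B₂ᵀ) = B₂ᵀ := by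
    have := congrArg Matrix.transpose hB₂
    rw [Matrix.transpose_mul, Matrix.transpose_mul, hC₂] at this
    exact this
  set Z₁ : Matrix (Fin m) (Fin n) ℝ := W₁ᵀ * B₁ᵀ with hZ₁
  set Z₂ : Matrix (Fin m) (Fin n) ℝ := W₂ᵀ * B₂ᵀ with hZ₂
  have g₁ : Z₁ᵀ * C₁ = B₁ := by
    have := congrArg Matrix.transpose f₁
    rw [Matrix.transpose_mul, hC₁, Matrix.transpose_transpose] at this
    exact this
  have g₂ : Z₂ᵀ * C₂ = B₂ := by
    have := congrArg Matrix.transpose f₂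
    rw [Matrix.transpose_mul, hC₂, Matrix.transpose_transpose] at this
    exact this
  have hZ₁T : Z₁ᵀ = B₁ * W₁ := by
    rw [hZ₁, Matrix.transpose_mul, Matrix.transpose_transpose, Matrix.transpose_transpose]
  have hZ₂T : Z₂ᵀ = B₂ * W₂ := by
    rw [hZ₂, Matrix.transpose_mul, Matrix.transpose_transpose, Matrix.transpose_transpose]
  set K : Matrix (Fin n ⊕ Fin m) (Fin n ⊕ Fin m) ℝ :=
    Matrix.fromBlocks 1 0 (-Z₂) 0 with hK
  set X : Matrix (Fin n) (Fin n) ℝ :=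
    ((A₂ - B₂ * W₂ * B₂ᵀ) - (A₁ - B₁ * W₁ * B₁ᵀ)) - (Z₁ - Z₂)ᵀ * C₁ * (Z₁ - Z₂) with hX
  have hKT : Kᵀ = Matrix.fromBlocks 1 (-Z₂ᵀ) 0 0 := by
    rw [hK, fromBlocks_transpose]
    simp
  have hsub : Matrix.fromBlocks A₂ B₂ B₂ᵀ C₂ - Matrix.fromBlocks A₁ B₁ B₁ᵀ C₁
      = Matrix.fromBlocks (A₂ - A₁) (B₂ - B₁) (B₂ᵀ - B₁ᵀ) (C₂ - C₁) := by
    ext (i | i) (j | j) <;> simp [fromBlocks]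
  have hG : Kᵀ * (Matrix.fromBlocks A₂ B₂ B₂ᵀ C₂ - Matrix.fromBlocks A₁ B₁ B₁ᵀ C₁) * K
      = Matrix.fromBlocks X 0 0 0 := by
    rw [hsub, hKT, hK, fromBlocks_multiply, fromBlocks_multiply, fromBlocks_inj]
    refine ⟨?_, by simp, by simp, by simp⟩
    rw [hX]
    have e1 : Z₂ᵀ * B₂ᵀ = B₂ * W₂ * B₂ᵀ := by rw [hZ₂T]
    have e2 : B₂ * Z₂ = Z₂ᵀ * C₂ * Z₂ := by rw [g₂]
    have e3 : Z₁ᵀ * C₁ * Z₁ = B₁ * W₁ * B₁ᵀ := by rw [Matrix.mul_assoc, f₁, hZ₁T]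
    have e4 : Z₁ᵀ * C₁ * Z₂ = B₁ * Z₂ := by rw [g₁]
    have e5 : Z₂ᵀ * C₁ * Z₁ = Z₂ᵀ * B₁ᵀ := by rw [Matrix.mul_assoc, f₁]
    simp only [Matrix.one_mul, Matrix.mul_one, Matrix.neg_mul, Matrix.mul_neg,
      Matrix.add_mul, Matrix.mul_add, Matrix.sub_mul, Matrix.mul_sub,
      Matrix.transpose_sub, neg_neg, neg_sub]
    rw [e1, ← e2, e3, e4, e5]
    abel
  have hPSD1 : (Kᵀ * (Matrix.fromBlocks A₂ B₂ B₂ᵀ C₂ - Matrix.fromBlocks A₁ B₁ B₁ᵀ C₁)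
      * K).PosSemidef := by
    have h := hle.conjTranspose_mul_mul_same K
    rwa [conjTranspose_eq_transpose_of_trivial] at h
  rw [hG] at hPSD1
  have hXpsd : X.PosSemidef := by
    have h := hPSD1.submatrix (Sum.inl : Fin n → Fin n ⊕ Fin m)
    have he : (Matrix.fromBlocks X (0 : Matrix (Fin n) (Fin m) ℝ)
        (0 : Matrix (Fin m) (Fin n) ℝ) (0 : Matrix (Fin m) (Fin m) ℝ)).submatrix
        (Sum.inl : Fin n → Fin n ⊕ Fin m) Sum.inl = X := by
      ext i j; simp
    rwa [he] at h
  have hC₁psd : C₁.PosSemidef := by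
    have h := hM₁.submatrix (Sum.inr : Fin m → Fin n ⊕ Fin m)
    have he : (Matrix.fromBlocks A₁ B₁ B₁ᵀ C₁).submatrix
        (Sum.inr : Fin m → Fin n ⊕ Fin m) Sum.inr = C₁ := by
      ext i j; simp
    rwa [he] at h
  have hTpsd : ((Z₁ - Z₂)ᵀ * C₁ * (Z₁ - Z₂)).PosSemidef := by
    have h := hC₁psd.conjTranspose_mul_mul_same (Z₁ - Z₂)
    rwa [conjTranspose_eq_transpose_of_trivial] at h
  have hfin := hXpsd.add hTpsd
  rwa [hX, sub_add_cancel] at hfin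
end

section
/- Let n, m be positive integers, let M₁ = [[A₁, B₁],[B₁', C₁]] and M₂ = [[A₂, B₂],[B₂', C₂]] be real symmetric positive semidefinite (n+m)×(n+m) matrices partitioned so that Aᵢ is n×n and Cᵢ is m×m, and let λ ∈ [0,1]. Write M_λ = λM₁ + (1−λ)M₂ = [[A_λ, B_λ],[B_λ', C_λ]] with the same partition. Then for any matrices W₁, W₂, W_λ with C₁W₁C₁ = C₁, C₂W₂C₂ = C₂ and C_λW_λC_λ = C_λ, one has λ(A₁ − B₁W₁B₁') + (1−λ)(A₂ − B₂W₂B₂') ⪯ A_λ − B_λ W_λ B_λ'. In other words, the Schur complement of a positive semidefinite matrix is a concave function of the matrix. -/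
/-! For `U = [1; Y]`, `Uᵀ M U = (A - B W Bᵀ) + (Y + W Bᵀ)ᵀ C (Y + W Bᵀ)` as soon as
`C W Bᵀ = Bᵀ`, which holds because positive semidefiniteness of `M` forces `ker C ⊆ ker B`.
Hence the Schur complement is the minimum over `Y` of the linear maps `M ↦ Uᵀ M U`, attained at
`Y = -W Bᵀ`, and a pointwise minimum of linear maps is concave. -/

open Matrix

namespace Matrix

theorem fromRows_one_transpose_mul_fromBlocks_mul {R n m : Type*} [CommRing R] [Fintype n]
    [Fintype m] [DecidableEq n] (A : Matrix n n R) (B : Matrix n m R) (C : Matrix m m R)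
    (K Y : Matrix m n R) (hC : Cᵀ = C) (hK : C * K = Bᵀ) :
    (fromRows (1 : Matrix n n R) Y)ᵀ * fromBlocks A B Bᵀ C * fromRows (1 : Matrix n n R) Y
      = A - Kᵀ * C * K + (Y + K)ᵀ * C * (Y + K) := by
  obtain rfl : B = Kᵀ * C := by rw [← transpose_transpose B, ← hK, transpose_mul, hC]
  rw [transpose_fromRows, transpose_one, Matrix.mul_assoc (fromCols _ _), fromBlocks_mul_fromRows,
    fromCols_mul_fromRows, transpose_mul, hC]
  simp only [transpose_add, transpose_transpose, Matrix.add_mul, Matrix.mul_add, Matrix.mul_one,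
    Matrix.one_mul, Matrix.mul_assoc]
  abel

variable {n m : Type*} [Fintype n] [Fintype m]
  {A : Matrix n n ℝ} {B : Matrix n m ℝ} {C W : Matrix m m ℝ}

namespace PosSemidef

omit [Fintype n] [Fintype m] in
theorem fromBlocks₂₂ (h : (fromBlocks A B Bᵀ C).PosSemidef) : C.PosSemidef := by
  convert h.submatrix Sum.inr
  ext i j
  rfl

omit [Fintype n] [Fintype m] in
theorem transpose_eq_of_fromBlocks (h : (fromBlocks A B Bᵀ C).PosSemidef) : Cᵀ = C :=
  (isHermitian_iff_isSymm.mp h.fromBlocks₂₂.isHermitian).eq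

theorem mulVec_eq_zero_of_fromBlocks (h : (fromBlocks A B Bᵀ C).PosSemidef)
    {v : m → ℝ} (hv : C *ᵥ v = 0) : B *ᵥ v = 0 := by
  have hquad : star (Sum.elim 0 v) ⬝ᵥ fromBlocks A B Bᵀ C *ᵥ Sum.elim 0 v = 0 := by
    simp [fromBlocks_mulVec, hv]
  ext i
  simpa [fromBlocks_mulVec] using
    congrFun ((h.dotProduct_mulVec_zero_iff _).mp hquad) (Sum.inl i)

theorem mul_eq_zero_of_fromBlocks (h : (fromBlocks A B Bᵀ C).PosSemidef)
    {k : Type*} {N : Matrix m k ℝ} (hN : C * N = 0) : B * N = 0 := by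
  ext i j
  simpa [mulVec, dotProduct, mul_apply] using
    congrFun (h.mulVec_eq_zero_of_fromBlocks (v := fun l => N l j)
      (by ext l; simpa [mul_apply, mulVec, dotProduct] using congrFun (congrFun hN l) j)) i

theorem mul_mul_transpose_of_fromBlocks (h : (fromBlocks A B Bᵀ C).PosSemidef)
    (hW : C * W * C = C) : C * W * Bᵀ = Bᵀ := by
  classical
  have hC := h.transpose_eq_of_fromBlocks
  have hker : C * (Wᵀ * C - 1) = 0 := by
    calc C * (Wᵀ * C - 1) = (C * W * C)ᵀ - C := by
          simp only [transpose_mul, hC, Matrix.mul_sub, Matrix.mul_one, Matrix.mul_assoc]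
      _ = 0 := by rw [hW, hC, sub_self]
  have hB : B * (Wᵀ * C) = B := by
    simpa [Matrix.mul_sub, sub_eq_zero] using h.mul_eq_zero_of_fromBlocks hker
  calc C * W * Bᵀ = (B * (Wᵀ * C))ᵀ := by
        simp only [transpose_mul, hC, transpose_transpose, Matrix.mul_assoc]
    _ = Bᵀ := by rw [hB]

variable [DecidableEq n]

theorem fromRows_one_transpose_mul_mul (h : (fromBlocks A B Bᵀ C).PosSemidef)
    (hW : C * W * C = C) (Y : Matrix m n ℝ) :
    (fromRows (1 : Matrix n n ℝ) Y)ᵀ * fromBlocks A B Bᵀ C * fromRows (1 : Matrix n n ℝ) Y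
      = A - B * W * Bᵀ + (Y + W * Bᵀ)ᵀ * C * (Y + W * Bᵀ) := by
  have hC := h.transpose_eq_of_fromBlocks
  have hK := h.mul_mul_transpose_of_fromBlocks hW
  have hBWB : B * W * Bᵀ = (W * Bᵀ)ᵀ * C * (W * Bᵀ) :=
    calc B * W * Bᵀ = (C * W * Bᵀ)ᵀ * W * (C * W * Bᵀ) := by rw [hK, transpose_transpose]
      _ = (W * Bᵀ)ᵀ * (C * W * C) * (W * Bᵀ) := by
        simp only [transpose_mul, hC, Matrix.mul_assoc]
      _ = (W * Bᵀ)ᵀ * C * (W * Bᵀ) := by rw [hW]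
  rw [hBWB]
  exact fromRows_one_transpose_mul_fromBlocks_mul A B C _ Y hC (by rw [← Matrix.mul_assoc, hK])

theorem schur_le_fromRows_one_transpose_mul_mul (h : (fromBlocks A B Bᵀ C).PosSemidef)
    (hW : C * W * C = C) (Y : Matrix m n ℝ) :
    ((fromRows (1 : Matrix n n ℝ) Y)ᵀ * fromBlocks A B Bᵀ C * fromRows (1 : Matrix n n ℝ) Y
      - (A - B * W * Bᵀ)).PosSemidef := by
  rw [h.fromRows_one_transpose_mul_mul hW Y, add_sub_cancel_left]
  simpa using h.fromBlocks₂₂.conjTranspose_mul_mul_same (Y + W * Bᵀ)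

theorem fromRows_one_transpose_mul_mul_eq_schur (h : (fromBlocks A B Bᵀ C).PosSemidef)
    (hW : C * W * C = C) :
    (fromRows (1 : Matrix n n ℝ) (-(W * Bᵀ)))ᵀ * fromBlocks A B Bᵀ C
      * fromRows (1 : Matrix n n ℝ) (-(W * Bᵀ)) = A - B * W * Bᵀ := by
  simp [h.fromRows_one_transpose_mul_mul hW]

end PosSemidef

end Matrix

theorem schur_complement_concave_general
    (n m : ℕ)
    (A₁ A₂ : Matrix (Fin n) (Fin n) ℝ)
    (B₁ B₂ : Matrix (Fin n) (Fin m) ℝ)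
    (C₁ C₂ : Matrix (Fin m) (Fin m) ℝ)
    (lam : ℝ) (hlam0 : 0 ≤ lam) (hlam1 : lam ≤ 1)
    (W₁ W₂ Wlam : Matrix (Fin m) (Fin m) ℝ)
    (hM₁ : (Matrix.fromBlocks A₁ B₁ B₁ᵀ C₁).PosSemidef)
    (hM₂ : (Matrix.fromBlocks A₂ B₂ B₂ᵀ C₂).PosSemidef)
    (hW₁ : C₁ * W₁ * C₁ = C₁) (hW₂ : C₂ * W₂ * C₂ = C₂)
    (hWlam : (lam • C₁ + (1 - lam) • C₂) * Wlam * (lam • C₁ + (1 - lam) • C₂)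
      = lam • C₁ + (1 - lam) • C₂) :
    (((lam • A₁ + (1 - lam) • A₂) -
        (lam • B₁ + (1 - lam) • B₂) * Wlam * (lam • B₁ + (1 - lam) • B₂)ᵀ) -
      (lam • (A₁ - B₁ * W₁ * B₁ᵀ) + (1 - lam) • (A₂ - B₂ * W₂ * B₂ᵀ))).PosSemidef := by
  have hlam : 0 ≤ 1 - lam := sub_nonneg.mpr hlam1
  set Blam := lam • B₁ + (1 - lam) • B₂
  have hMlam : fromBlocks (lam • A₁ + (1 - lam) • A₂) Blam Blamᵀ (lam • C₁ + (1 - lam) • C₂)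
      = lam • fromBlocks A₁ B₁ B₁ᵀ C₁ + (1 - lam) • fromBlocks A₂ B₂ B₂ᵀ C₂ := by
    simp only [Blam, transpose_add, transpose_smul, fromBlocks_smul, fromBlocks_add]
  have hMlam_psd := hMlam ▸ (hM₁.smul hlam0).add (hM₂.smul hlam)
  rw [← hMlam_psd.fromRows_one_transpose_mul_mul_eq_schur hWlam, hMlam]
  convert ((hM₁.schur_le_fromRows_one_transpose_mul_mul hW₁ (-(Wlam * Blamᵀ))).smul hlam0).add
    ((hM₂.schur_le_fromRows_one_transpose_mul_mul hW₂ (-(Wlam * Blamᵀ))).smul hlam) using 1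
  simp only [Matrix.mul_add, Matrix.add_mul, Matrix.mul_smul, Matrix.smul_mul, smul_sub]
  abel

/-- The Schur complement of a real symmetric positive semidefinite block matrix is
a concave function of the matrix (for any choices of generalized inverses of the
lower-right blocks). -/
theorem schur_complement_concave
    (n m : ℕ) (hn : 0 < n) (hm : 0 < m)
    (A₁ A₂ : Matrix (Fin n) (Fin n) ℝ)
    (B₁ B₂ : Matrix (Fin n) (Fin m) ℝ)
    (C₁ C₂ : Matrix (Fin m) (Fin m) ℝ)
    (lam : ℝ) (hlam0 : 0 ≤ lam) (hlam1 : lam ≤ 1)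
    (W₁ W₂ Wlam : Matrix (Fin m) (Fin m) ℝ)
    (hM₁ : (Matrix.fromBlocks A₁ B₁ B₁ᵀ C₁).PosSemidef)
    (hM₂ : (Matrix.fromBlocks A₂ B₂ B₂ᵀ C₂).PosSemidef)
    (hW₁ : C₁ * W₁ * C₁ = C₁) (hW₂ : C₂ * W₂ * C₂ = C₂)
    (hWlam : (lam • C₁ + (1 - lam) • C₂) * Wlam * (lam • C₁ + (1 - lam) • C₂)
      = lam • C₁ + (1 - lam) • C₂) :
    (((lam • A₁ + (1 - lam) • A₂) -
        (lam • B₁ + (1 - lam) • B₂) * Wlam * (lam • B₁ + (1 - lam) • B₂)ᵀ) -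
      (lam • (A₁ - B₁ * W₁ * B₁ᵀ) + (1 - lam) • (A₂ - B₂ * W₂ * B₂ᵀ))).PosSemidef :=
  schur_complement_concave_general n m A₁ A₂ B₁ B₂ C₁ C₂ lam hlam0 hlam1 W₁ W₂ Wlam hM₁ hM₂ hW₁ hW₂
    hWlam
end

section
/- Let n, m, N be positive integers, let M(1), …, M(N) be real symmetric positive semidefinite (n+m)×(n+m) matrices partitioned as M(l) = [[A(l), B(l)],[B(l)', C(l)]] with A(l) of size n×n, and let P₁, …, P_N ≥ 0 with ∑_l P_l = 1. For a positive semidefinite block matrix M = [[A, B],[B', C]] write S(M) = A − B W B' for any generalized inverse W of C (this value does not depend on the choice of W). If Φ is a function from real symmetric n×n matrices to ℝ that is concave and nondecreasing with respect to the Loewner order ⪯, then ∑_{l=1}^N P_l Φ(S(M(l))) ≤ Φ(S(∑_{l=1}^N P_l M(l))). -/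
/-!
For a positive semidefinite `M = fromBlocks A B Bᴴ C` and any `X`, the matrix
`[1, -X] M [1, -X]ᴴ = A - X Bᴴ - B Xᴴ + X C Xᴴ` dominates the Schur complement
`S(M) = A - B W Bᴴ` in the Loewner order, with equality at `X = B W`: positivity forces
`ker C ⊆ ker B`, i.e. `B W C = B`, and then the difference is `(X - B W) C (X - B W)ᴴ ⪰ 0`.
Since `[1, -X] M [1, -X]ᴴ` is linear in `M`, evaluating it at the minimiser `X` for
`∑ P l • M l` shows `∑ P l • S(M l) ⪯ S(∑ P l • M l)`. Jensen's inequality for the concave `Φ`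
and its monotonicity finish the proof.
-/

open Matrix Finset
open scoped MatrixOrder ComplexOrder

namespace Matrix

variable {𝕜 p q : Type*} [RCLike 𝕜]

theorem PosSemidef.of_fromBlocks₁₁ {A : Matrix p p 𝕜} {B : Matrix p q 𝕜} {B' : Matrix q p 𝕜}
    {C : Matrix q q 𝕜} (h : (fromBlocks A B B' C).PosSemidef) : A.PosSemidef :=
  h.submatrix Sum.inl

theorem PosSemidef.of_fromBlocks₂₂ {A : Matrix p p 𝕜} {B : Matrix p q 𝕜} {B' : Matrix q p 𝕜}
    {C : Matrix q q 𝕜} (h : (fromBlocks A B B' C).PosSemidef) : C.PosSemidef :=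
  h.submatrix Sum.inr

theorem posSemidef_fromBlocks_sum_smul {ι : Type*} (s : Finset ι) {w : ι → ℝ}
    (hw : ∀ i ∈ s, 0 ≤ w i) {A : ι → Matrix p p 𝕜} {B : ι → Matrix p q 𝕜}
    {C : ι → Matrix q q 𝕜} (h : ∀ i ∈ s, (fromBlocks (A i) (B i) (B i)ᴴ (C i)).PosSemidef) :
    (fromBlocks (∑ i ∈ s, w i • A i) (∑ i ∈ s, w i • B i) (∑ i ∈ s, w i • B i)ᴴ
      (∑ i ∈ s, w i • C i)).PosSemidef := by
  convert posSemidef_sum s fun i hi => (h i hi).smul (hw i hi) using 1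
  ext (i | i) (j | j) <;> simp [Matrix.sum_apply, conjTranspose_sum]

variable [Fintype q]

def schurQuadForm (A : Matrix p p 𝕜) (B : Matrix p q 𝕜) (C : Matrix q q 𝕜)
    (X : Matrix p q 𝕜) : Matrix p p 𝕜 :=
  A - X * Bᴴ - B * Xᴴ + X * C * Xᴴ

theorem isHermitian_schurQuadForm {A : Matrix p p 𝕜} (B : Matrix p q 𝕜) {C : Matrix q q 𝕜}
    (hA : A.IsHermitian) (hC : C.IsHermitian) (X : Matrix p q 𝕜) :
    (schurQuadForm A B C X).IsHermitian := by
  simp only [IsHermitian, schurQuadForm, conjTranspose_add, conjTranspose_sub, conjTranspose_mul,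
    conjTranspose_conjTranspose, hA.eq, hC.eq, Matrix.mul_assoc]
  abel

theorem schurQuadForm_of_mul_eq (A : Matrix p p 𝕜) {B : Matrix p q 𝕜} {C : Matrix q q 𝕜}
    {Y : Matrix p q 𝕜} (hY : Y * C = B) : schurQuadForm A B C Y = A - Y * Bᴴ := by
  simp [schurQuadForm, hY]

theorem schurQuadForm_eq_add_of_mul_eq (A : Matrix p p 𝕜) {B : Matrix p q 𝕜}
    {C : Matrix q q 𝕜} (hC : C.IsHermitian) {Y : Matrix p q 𝕜} (hY : Y * C = B)
    (X : Matrix p q 𝕜) :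
    schurQuadForm A B C X = schurQuadForm A B C Y + (X - Y) * C * (X - Y)ᴴ := by
  have hY' : C * Yᴴ = Bᴴ := by rw [← hY, conjTranspose_mul, hC.eq]
  have hYB : Y * Bᴴ = B * Yᴴ := by rw [← hY', ← Matrix.mul_assoc, hY]
  simp only [schurQuadForm, conjTranspose_sub, Matrix.sub_mul, Matrix.mul_sub, hY,
    Matrix.mul_assoc, hY', hYB]
  abel

theorem schurQuadForm_sum_smul {ι : Type*} (s : Finset ι) (w : ι → ℝ)
    (A : ι → Matrix p p 𝕜) (B : ι → Matrix p q 𝕜) (C : ι → Matrix q q 𝕜) (X : Matrix p q 𝕜) :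
    schurQuadForm (∑ i ∈ s, w i • A i) (∑ i ∈ s, w i • B i) (∑ i ∈ s, w i • C i) X =
      ∑ i ∈ s, w i • schurQuadForm (A i) (B i) (C i) X := by
  simp [schurQuadForm, Finset.sum_add_distrib, Finset.sum_sub_distrib, smul_sub, smul_add,
    conjTranspose_sum, Matrix.sum_mul, Matrix.mul_sum]

variable [Fintype p]

theorem PosSemidef.mulVec_eq_zero_of_fromBlocks_s2 {A : Matrix p p 𝕜} {B : Matrix p q 𝕜}
    {C : Matrix q q 𝕜} (h : (fromBlocks A B Bᴴ C).PosSemidef) {y : q → 𝕜} (hy : C *ᵥ y = 0) :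
    B *ᵥ y = 0 := by
  have hstar : star (Sum.elim 0 y : p ⊕ q → 𝕜) = Sum.elim (0 : p → 𝕜) (star y) := by
    ext (i | i) <;> simp
  have hM := (h.dotProduct_mulVec_zero_iff (Sum.elim 0 y)).mp
    (by simp [fromBlocks_mulVec, hy, hstar, sumElim_dotProduct_sumElim])
  simpa [fromBlocks_mulVec] using congrArg (· ∘ Sum.inl) hM

theorem PosSemidef.mul_mul_eq_of_fromBlocks {A : Matrix p p 𝕜} {B : Matrix p q 𝕜}
    {C W : Matrix q q 𝕜} (h : (fromBlocks A B Bᴴ C).PosSemidef) (hW : C * W * C = C) :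
    B * W * C = B := by
  refine ext_iff_mulVec.mpr fun x => ?_
  have hker : C *ᵥ ((W * C) *ᵥ x - x) = 0 := by
    simp [mulVec_sub, mulVec_mulVec, ← Matrix.mul_assoc, hW]
  have := h.mulVec_eq_zero_of_fromBlocks_s2 hker
  rwa [mulVec_sub, sub_eq_zero, mulVec_mulVec, ← Matrix.mul_assoc] at this

theorem schurCompl_le_schurQuadForm {A : Matrix p p 𝕜} {B : Matrix p q 𝕜} {C W : Matrix q q 𝕜}
    (h : (fromBlocks A B Bᴴ C).PosSemidef) (hW : C * W * C = C) (X : Matrix p q 𝕜) :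
    A - B * W * Bᴴ ≤ schurQuadForm A B C X := by
  have hC := h.of_fromBlocks₂₂
  have hBW := h.mul_mul_eq_of_fromBlocks hW
  rw [schurQuadForm_eq_add_of_mul_eq A hC.isHermitian hBW X, schurQuadForm_of_mul_eq A hBW]
  exact le_add_of_nonneg_right (hC.mul_mul_conjTranspose_same _).nonneg

theorem isHermitian_schurCompl {A : Matrix p p 𝕜} {B : Matrix p q 𝕜} {C W : Matrix q q 𝕜}
    (h : (fromBlocks A B Bᴴ C).PosSemidef) (hW : C * W * C = C) :
    (A - B * W * Bᴴ).IsHermitian := by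
  rw [← schurQuadForm_of_mul_eq A (h.mul_mul_eq_of_fromBlocks hW)]
  exact isHermitian_schurQuadForm B h.of_fromBlocks₁₁.isHermitian h.of_fromBlocks₂₂.isHermitian _

theorem sum_smul_schurCompl_le {ι : Type*} {s : Finset ι} {w : ι → ℝ} (hw : ∀ i ∈ s, 0 ≤ w i)
    {A : ι → Matrix p p 𝕜} {B : ι → Matrix p q 𝕜} {C W : ι → Matrix q q 𝕜}
    (h : ∀ i ∈ s, (fromBlocks (A i) (B i) (B i)ᴴ (C i)).PosSemidef)
    (hW : ∀ i ∈ s, C i * W i * C i = C i) {W' : Matrix q q 𝕜}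
    (hW' : (∑ i ∈ s, w i • C i) * W' * (∑ i ∈ s, w i • C i) = ∑ i ∈ s, w i • C i) :
    ∑ i ∈ s, w i • (A i - B i * W i * (B i)ᴴ) ≤
      (∑ i ∈ s, w i • A i) - (∑ i ∈ s, w i • B i) * W' * (∑ i ∈ s, w i • B i)ᴴ := by
  have hBW' := (posSemidef_fromBlocks_sum_smul s hw h).mul_mul_eq_of_fromBlocks hW'
  rw [← schurQuadForm_of_mul_eq _ hBW', schurQuadForm_sum_smul]
  refine Finset.sum_le_sum fun i hi => ?_
  rw [le_iff, ← smul_sub]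
  exact PosSemidef.smul (schurCompl_le_schurQuadForm (h i hi) (hW i hi) _) (hw i hi)

end Matrix

theorem concaveOn_setOf_isHermitian {𝕜 n : Type*} [RCLike 𝕜] {Φ : Matrix n n 𝕜 → ℝ}
    (hconc : ∀ lam : ℝ, 0 ≤ lam → lam ≤ 1 → ∀ M₁ M₂ : Matrix n n 𝕜,
      M₁.IsHermitian → M₂.IsHermitian →
      lam * Φ M₁ + (1 - lam) * Φ M₂ ≤ Φ (lam • M₁ + (1 - lam) • M₂)) :
    ConcaveOn ℝ {M | M.IsHermitian} Φ := by
  refine ⟨fun M₁ h₁ M₂ h₂ a b _ _ _ => ?_, fun M₁ h₁ M₂ h₂ a b ha _ hab => ?_⟩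
  · exact (h₁.smul (IsSelfAdjoint.all a)).add (h₂.smul (IsSelfAdjoint.all b))
  · obtain rfl : b = 1 - a := by linarith
    exact hconc a ha (by linarith) M₁ M₂ h₁ h₂

theorem sum_criterion_schur_le_general
    (n m N : ℕ)
    (A : Fin N → Matrix (Fin n) (Fin n) ℝ)
    (B : Fin N → Matrix (Fin n) (Fin m) ℝ)
    (C : Fin N → Matrix (Fin m) (Fin m) ℝ)
    (hM : ∀ l, (Matrix.fromBlocks (A l) (B l) (B l)ᵀ (C l)).PosSemidef)
    (P : Fin N → ℝ) (hP0 : ∀ l, 0 ≤ P l) (hP1 : ∑ l, P l = 1)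
    (W : Fin N → Matrix (Fin m) (Fin m) ℝ)
    (hW : ∀ l, C l * W l * C l = C l)
    (Wsum : Matrix (Fin m) (Fin m) ℝ)
    (hWsum : (∑ l, P l • C l) * Wsum * (∑ l, P l • C l) = ∑ l, P l • C l)
    (Φ : Matrix (Fin n) (Fin n) ℝ → ℝ)
    (hconc : ∀ lam : ℝ, 0 ≤ lam → lam ≤ 1 → ∀ M₁ M₂ : Matrix (Fin n) (Fin n) ℝ,
      M₁.IsHermitian → M₂.IsHermitian →
      lam * Φ M₁ + (1 - lam) * Φ M₂ ≤ Φ (lam • M₁ + (1 - lam) • M₂))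
    (hmono : ∀ M₁ M₂ : Matrix (Fin n) (Fin n) ℝ, M₁.IsHermitian → M₂.IsHermitian →
      (M₂ - M₁).PosSemidef → Φ M₁ ≤ Φ M₂) :
    ∑ l, P l * Φ (A l - B l * W l * (B l)ᵀ) ≤
      Φ ((∑ l, P l • A l) - (∑ l, P l • B l) * Wsum * (∑ l, P l • B l)ᵀ) := by
  simp only [← conjTranspose_eq_transpose_of_trivial] at hM ⊢
  have hMsum := posSemidef_fromBlocks_sum_smul univ (fun l _ => hP0 l) fun l _ => hM l
  have hS : ∀ l, (A l - B l * W l * (B l)ᴴ).IsHermitian := fun l =>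
    isHermitian_schurCompl (hM l) (hW l)
  calc ∑ l, P l * Φ (A l - B l * W l * (B l)ᴴ)
      ≤ Φ (∑ l, P l • (A l - B l * W l * (B l)ᴴ)) :=
        (concaveOn_setOf_isHermitian hconc).le_map_sum (fun l _ => hP0 l) hP1 fun l _ => hS l
    _ ≤ _ := hmono _ _ (isSelfAdjoint_sum _ fun l _ => (hS l).smul (IsSelfAdjoint.all (P l)))
        (isHermitian_schurCompl hMsum hWsum)
        (sum_smul_schurCompl_le (fun l _ => hP0 l) (fun l _ => hM l) (fun l _ => hW l) hWsum)

/-- Jensen-type inequality for the Schur complement composed with a concave,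
Loewner-nondecreasing criterion `Φ`: for positive semidefinite block matrices
`M l = [[A l, B l], [(B l)ᵀ, C l]]` and weights `P l ≥ 0` summing to one,
`∑ l, P l * Φ (S (M l)) ≤ Φ (S (∑ l, P l • M l))`, where `S` denotes the Schur
complement formed with any generalized inverse of the lower-right block. -/
theorem sum_criterion_schur_le
    (n m N : ℕ) (hn : 0 < n) (hm : 0 < m) (hN : 0 < N)
    (A : Fin N → Matrix (Fin n) (Fin n) ℝ)
    (B : Fin N → Matrix (Fin n) (Fin m) ℝ)
    (C : Fin N → Matrix (Fin m) (Fin m) ℝ)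
    (hM : ∀ l, (Matrix.fromBlocks (A l) (B l) (B l)ᵀ (C l)).PosSemidef)
    (P : Fin N → ℝ) (hP0 : ∀ l, 0 ≤ P l) (hP1 : ∑ l, P l = 1)
    (W : Fin N → Matrix (Fin m) (Fin m) ℝ)
    (hW : ∀ l, C l * W l * C l = C l)
    (Wsum : Matrix (Fin m) (Fin m) ℝ)
    (hWsum : (∑ l, P l • C l) * Wsum * (∑ l, P l • C l) = ∑ l, P l • C l)
    (Φ : Matrix (Fin n) (Fin n) ℝ → ℝ)
    (hconc : ∀ lam : ℝ, 0 ≤ lam → lam ≤ 1 → ∀ M₁ M₂ : Matrix (Fin n) (Fin n) ℝ,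
      M₁.IsHermitian → M₂.IsHermitian →
      lam * Φ M₁ + (1 - lam) * Φ M₂ ≤ Φ (lam • M₁ + (1 - lam) • M₂))
    (hmono : ∀ M₁ M₂ : Matrix (Fin n) (Fin n) ℝ, M₁.IsHermitian → M₂.IsHermitian →
      (M₂ - M₁).PosSemidef → Φ M₁ ≤ Φ M₂) :
    ∑ l, P l * Φ (A l - B l * W l * (B l)ᵀ) ≤
      Φ ((∑ l, P l • A l) - (∑ l, P l • B l) * Wsum * (∑ l, P l • B l)ᵀ) :=
  sum_criterion_schur_le_general n m N A B C hM P hP0 hP1 W hW Wsum hWsum Φ hconc hmono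
end

section
/- Let k be a positive integer, let η ∈ ℝ^k, and let Σ = I_k + η 1_k' + 1_k η'. If Σ is invertible and 1_k' Σ⁻¹ 1_k ≠ 0, then Σ⁻¹ − Σ⁻¹ J_k Σ⁻¹ / (1_k' Σ⁻¹ 1_k) = I_k − J_k/k. -/
/-
Let `P = I - J/k` be the centering matrix and `Σ = I + η 1' + 1 η'`. Expanding the products
gives `Σ P Σ = Σ - β J` with `β = (1 + ∑ ηᵢ)² / k - η'η`; conjugating by `Σ⁻¹` yields
`P = Σ⁻¹ - β Σ⁻¹ J Σ⁻¹`. Since `P 1 = 0`, the quadratic form `1' · 1` of this identity reads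
`0 = c - β c²` with `c = 1' Σ⁻¹ 1 ≠ 0`, so `β = c⁻¹`.
-/

open Matrix Finset

variable {n K : Type*} [Fintype n] [DecidableEq n] [Field K]

theorem inv_sub_smul_mul_vecMulVec_mul_eq_of_mul_mul_eq {S P : Matrix n n K} {u : n → K} {β : K}
    (hS : IsUnit S.det) (hSPS : S * P * S = S - β • vecMulVec u u) (hP : u ⬝ᵥ P *ᵥ u = 0)
    (hc : u ⬝ᵥ S⁻¹ *ᵥ u ≠ 0) :
    S⁻¹ - (u ⬝ᵥ S⁻¹ *ᵥ u)⁻¹ • (S⁻¹ * vecMulVec u u * S⁻¹) = P := by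
  set c := u ⬝ᵥ S⁻¹ *ᵥ u
  have hP_eq : P = S⁻¹ - β • (S⁻¹ * vecMulVec u u * S⁻¹) := by
    calc P = S⁻¹ * (S * P * S) * S⁻¹ := by
          simp only [← Matrix.mul_assoc, nonsing_inv_mul S hS, Matrix.one_mul]
          rw [Matrix.mul_assoc, mul_nonsing_inv S hS, Matrix.mul_one]
      _ = _ := by
          rw [hSPS, Matrix.mul_sub, Matrix.sub_mul, Matrix.mul_smul, Matrix.smul_mul,
            nonsing_inv_mul S hS, Matrix.one_mul]
  have hquad : u ⬝ᵥ (S⁻¹ * vecMulVec u u * S⁻¹) *ᵥ u = c * c := by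
    rw [mul_vecMulVec, vecMulVec_mul, vecMulVec_mulVec, ← dotProduct_mulVec]
    simp [c, dotProduct_smul]
  have hβ : β = c⁻¹ := by
    rw [hP_eq, sub_mulVec, dotProduct_sub, smul_mulVec, dotProduct_smul, hquad, smul_eq_mul] at hP
    change c - β * (c * c) = 0 at hP
    refine eq_inv_of_mul_eq_one_left (mul_left_cancel₀ hc ?_)
    linear_combination -hP
  rw [← hβ, hP_eq]

def typeH (η : n → K) : Matrix n n K := 1 + vecMulVec η 1 + vecMulVec 1 η

variable (n K) in
def centeringMatrix : Matrix n n K := 1 - (Fintype.card n : K)⁻¹ • vecMulVec 1 1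

theorem centeringMatrix_mulVec_one (hn : (Fintype.card n : K) ≠ 0) :
    centeringMatrix n K *ᵥ 1 = 0 := by
  rw [centeringMatrix, sub_mulVec, one_mulVec, smul_mulVec, vecMulVec_mulVec, one_dotProduct_one,
    op_smul_eq_smul, smul_smul, inv_mul_cancel₀ hn, one_smul, sub_self]

theorem typeH_mul_centeringMatrix_mul_typeH (η : n → K) (hn : (Fintype.card n : K) ≠ 0) :
    typeH η * centeringMatrix n K * typeH η =
      typeH η - ((1 + ∑ i, η i) ^ 2 / Fintype.card n - η ⬝ᵥ η) • vecMulVec 1 1 := by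
  simp only [typeH, centeringMatrix, Matrix.mul_add, Matrix.add_mul, Matrix.mul_sub,
    Matrix.sub_mul, Matrix.mul_smul, Matrix.smul_mul, Matrix.mul_one, Matrix.one_mul,
    vecMulVec_mul_vecMulVec, vecMulVec_smul]
  simp only [dotProduct_one, one_dotProduct, Pi.one_apply, sum_const, card_univ, nsmul_eq_mul,
    mul_one]
  match_scalars <;> field_simp <;> ring

/-- For `S = I_k + η 1_k' + 1_k η'` (a "type-H" covariance matrix), if `S` is
invertible and `1_k' S⁻¹ 1_k ≠ 0`, then
`S⁻¹ − S⁻¹ J_k S⁻¹ / (1_k' S⁻¹ 1_k) = I_k − J_k / k`. -/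
theorem typeH_inverse_identity
    (k : ℕ) (hk : 0 < k) (η : Fin k → ℝ)
    (S : Matrix (Fin k) (Fin k) ℝ)
    (hS : S = (1 : Matrix (Fin k) (Fin k) ℝ) +
      Matrix.of (fun i _ => η i) + Matrix.of (fun _ j => η j))
    (hinv : IsUnit S.det)
    (hone : ∑ i, ∑ j, S⁻¹ i j ≠ 0) :
    S⁻¹ - (∑ i, ∑ j, S⁻¹ i j)⁻¹ •
        (S⁻¹ * Matrix.of (fun _ _ => (1 : ℝ)) * S⁻¹) =
      (1 : Matrix (Fin k) (Fin k) ℝ) - (k : ℝ)⁻¹ • Matrix.of (fun _ _ => (1 : ℝ)) := by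
  have hk0 : (Fintype.card (Fin k) : ℝ) ≠ 0 := by simpa using hk.ne'
  have hJ : (Matrix.of fun _ _ => 1 : Matrix (Fin k) (Fin k) ℝ) = vecMulVec 1 1 := by
    ext; simp [vecMulVec_apply]
  have hS_typeH : S = typeH η := by
    rw [hS, typeH]; congr 2 <;> ext <;> simp [vecMulVec_apply]
  have hsum : ∑ i, ∑ j, S⁻¹ i j = 1 ⬝ᵥ S⁻¹ *ᵥ 1 := by simp [dotProduct, mulVec]
  have hcenter : (1 : Matrix (Fin k) (Fin k) ℝ) - (k : ℝ)⁻¹ • vecMulVec 1 1 =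
      centeringMatrix (Fin k) ℝ := by
    rw [centeringMatrix, Fintype.card_fin]
  rw [hsum] at hone ⊢
  rw [hJ, hcenter]
  subst hS_typeH
  exact inv_sub_smul_mul_vecMulVec_mul_eq_of_mul_mul_eq hinv
    (typeH_mul_centeringMatrix_mul_typeH η hk0)
    (by rw [centeringMatrix_mulVec_one hk0, dotProduct_zero]) hone
end

section
/- Let i, j, k, m₁, m₂ be positive integers with m₁ ≤ min(i,j) and m₂ ≤ min(j,k). Then B^{m₁}_{i,j} B^{m₂}_{j,k} = B^{min(m₁,m₂)}_{i,k}. -/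
/-!
Write `B^m_{i,j} = D - m⁻¹ • u vᵀ`, where `D` is the `i × j` matrix with `1` at the diagonal
positions `(a, a)`, `a < m`, and `u`, `v` are the indicator vectors of the first `m` coordinates.
Multiplying out two such decompositions, the products `D₁ D₂`, `D₁ u₂` and `v₁ᵀ D₂` are of the same
kind, now cut off at `min m₁ m₂`, and `v₁ᵀ u₂ = min m₁ m₂`; all of this uses `m₁, m₂ ≤ j`. The two
rank-one terms carrying the larger of `m₁`, `m₂` then cancel, leaving `B^{min(m₁,m₂)}_{i,k}`.
-/

open Matrix

/-- `B^m_{i,j}`: the `i × j` real matrix whose upper-left `m × m` block is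
`B_m = I_m − J_m/m` and whose remaining entries are `0`. -/
noncomputable def Bblock (m i j : ℕ) : Matrix (Fin i) (Fin j) ℝ :=
  Matrix.of fun a b =>
    if (a : ℕ) < m ∧ (b : ℕ) < m then
      (if (a : ℕ) = (b : ℕ) then 1 else 0) - 1 / (m : ℝ)
    else 0

section Prefix

variable (R : Type*) [CommSemiring R]

def prefixOnes (m n : ℕ) : Fin n → R := fun a => if (a : ℕ) < m then 1 else 0

def prefixId (m i j : ℕ) : Matrix (Fin i) (Fin j) R :=
  of fun a b => if (a : ℕ) < m ∧ (a : ℕ) = b then 1 else 0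

variable {R}

theorem transpose_prefixId (m i j : ℕ) : (prefixId R m i j)ᵀ = prefixId R m j i := by
  ext b a
  simp only [prefixId, transpose_apply, of_apply]
  by_cases hab : (a : ℕ) = b
  · simp [hab]
  · simp [hab, Ne.symm hab]

theorem prefixId_mul_prefixId {m₁ m₂ i j k : ℕ} (h : m₁ ≤ j) :
    prefixId R m₁ i j * prefixId R m₂ j k = prefixId R (min m₁ m₂) i k := by
  ext a c
  simp only [prefixId, mul_apply, of_apply]
  by_cases ha : (a : ℕ) < m₁
  · rw [Finset.sum_eq_single ⟨a, ha.trans_le h⟩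
      (fun b _ hb => by simp [Fin.ext_iff] at hb; simp [Ne.symm hb]) (by simp)]
    simp [ha]
  · simp [ha]

theorem prefixId_mulVec_prefixOnes {m₁ m₂ i j : ℕ} (h : m₁ ≤ j) :
    prefixId R m₁ i j *ᵥ prefixOnes R m₂ j = prefixOnes R (min m₁ m₂) i := by
  ext a
  simp only [prefixId, prefixOnes, mulVec, dotProduct, of_apply]
  by_cases ha : (a : ℕ) < m₁
  · rw [Finset.sum_eq_single ⟨a, ha.trans_le h⟩
      (fun b _ hb => by simp [Fin.ext_iff] at hb; simp [Ne.symm hb]) (by simp)]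
    simp [ha]
  · simp [ha]

theorem prefixOnes_vecMul_prefixId {m₁ m₂ j k : ℕ} (h : m₂ ≤ j) :
    prefixOnes R m₁ j ᵥ* prefixId R m₂ j k = prefixOnes R (min m₁ m₂) k := by
  rw [← transpose_prefixId, vecMul_transpose, prefixId_mulVec_prefixOnes h, min_comm]

theorem prefixOnes_dotProduct_prefixOnes {m₁ m₂ j : ℕ} (h : min m₁ m₂ ≤ j) :
    prefixOnes R m₁ j ⬝ᵥ prefixOnes R m₂ j = (min m₁ m₂ : ℕ) := by
  simp only [prefixOnes, dotProduct, ite_mul, one_mul, zero_mul, ← ite_and, ← lt_min_iff,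
    Finset.sum_boole, Fin.card_filter_val_lt]
  rw [min_eq_right h]

end Prefix

theorem Bblock_eq_prefixId_sub (m i j : ℕ) :
    Bblock m i j =
      prefixId ℝ m i j - (m : ℝ)⁻¹ • vecMulVec (prefixOnes ℝ m i) (prefixOnes ℝ m j) := by
  ext a b
  simp only [Bblock, prefixId, prefixOnes, of_apply, Matrix.sub_apply, Matrix.smul_apply,
    vecMulVec_apply, smul_eq_mul]
  split_ifs <;> simp_all

theorem Bblock_mul_Bblock_general
    (i j k m₁ m₂ : ℕ)
    (hm₁ : 0 < m₁) (hm₂ : 0 < m₂)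
    (h₁ : m₁ ≤ min i j) (h₂ : m₂ ≤ min j k) :
    Bblock m₁ i j * Bblock m₂ j k = Bblock (min m₁ m₂) i k := by
  have hj₁ : m₁ ≤ j := h₁.trans (min_le_right _ _)
  have hj₂ : m₂ ≤ j := h₂.trans (min_le_left _ _)
  simp only [Bblock_eq_prefixId_sub, Matrix.sub_mul, Matrix.mul_sub, Matrix.smul_mul,
    Matrix.mul_smul, vecMulVec_mul_vecMulVec]
  -- only now, so that `mul_vecMulVec` cannot swallow the product of the two rank-one terms
  simp only [mul_vecMulVec, vecMulVec_mul, prefixId_mul_prefixId hj₁,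
    prefixId_mulVec_prefixOnes hj₁, prefixOnes_vecMul_prefixId hj₂,
    prefixOnes_dotProduct_prefixOnes (min_le_of_left_le hj₁), vecMulVec_smul, smul_smul]
  have hm₁' : (m₁ : ℝ) ≠ 0 := Nat.cast_ne_zero.2 hm₁.ne'
  have hm₂' : (m₂ : ℝ) ≠ 0 := Nat.cast_ne_zero.2 hm₂.ne'
  rcases le_total m₁ m₂ with h | h
  · rw [min_eq_left h]
    match_scalars <;> field_simp; ring
  · rw [min_eq_right h]
    match_scalars <;> field_simp; ring

/-- `B^{m₁}_{i,j} B^{m₂}_{j,k} = B^{min(m₁,m₂)}_{i,k}`. -/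
theorem Bblock_mul_Bblock
    (i j k m₁ m₂ : ℕ) (hi : 0 < i) (hj : 0 < j) (hk : 0 < k)
    (hm₁ : 0 < m₁) (hm₂ : 0 < m₂)
    (h₁ : m₁ ≤ min i j) (h₂ : m₂ ≤ min j k) :
    Bblock m₁ i j * Bblock m₂ j k = Bblock (min m₁ m₂) i k :=
  Bblock_mul_Bblock_general i j k m₁ m₂ hm₁ hm₂ h₁ h₂
end
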